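/- arXiv:2107.03300 — 3 statements merged into one kernel-verified Lean document; each statement's English description precedes it below -/
import Mathlib

section
/- Let M be a 2m×k complex matrix with Mᵀ·M = I_k and N a 2m×n complex matrix with Nᵀ·N = I_n, and let U = (2·M·Mᵀ − I_{2m})·(2·N·Nᵀ − I_{2m}). Then for every complex number u with u ≠ 1 and u ≠ −1, det(I_{2m} − u·U) = (1−u)^{2m−n−k} · (1+u)^{n−k} · det((1+u)²·I_k − 4u·Mᵀ·N·Nᵀ·M). -/
/-!
Write `P = M Mᵀ`, `Q = N Nᵀ` and `A = Mᵀ N`. Expanding the product gives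
`1 - u U = (1 - u) • 1 + 2u • [M N] [Mᵀ (1 - 2Q); Nᵀ]`, a scalar matrix plus a product through
an index set of size `k + n`. The Weinstein–Aronszajn identity moves the determinant there, at the
cost of `(1 - u) ^ (2m - k - n)`, and orthonormality of the columns of `M` and `N` makes the
swapped product the block matrix `[[1 - 2AAᵀ, -A], [Aᵀ, 1]]`. After scaling, its lower right block
is `(1 + u) • 1`, and the Schur complement is `(1 + u)⁻¹ • ((1 + u)² • 1 - 4u • AAᵀ)`.
-/

open Matrix

namespace Matrix

variable {ι κ ν K : Type*} [Field K]

theorem smul_one_add_mul_eq_smul [Fintype κ] [DecidableEq ι] {a : K} (ha : a ≠ 0)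
    (X : Matrix ι κ K) (Y : Matrix κ ι K) : a • 1 + X * Y = a • (1 + (a⁻¹ • X) * Y) := by
  rw [smul_add, smul_mul, smul_smul, mul_inv_cancel₀ ha, one_smul]

theorem det_smul_one_add_mul_comm [Fintype ι] [Fintype κ] [DecidableEq ι] [DecidableEq κ]
    {a : K} (ha : a ≠ 0) (X : Matrix ι κ K) (Y : Matrix κ ι K) :
    det (a • 1 + X * Y) = a ^ ((Fintype.card ι : ℤ) - Fintype.card κ) * det (a • 1 + Y * X) := by
  rw [smul_one_add_mul_eq_smul ha, smul_one_add_mul_eq_smul ha, det_smul, det_smul,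
    det_one_add_mul_comm, smul_mul, Matrix.mul_smul, zpow_sub₀ ha, zpow_natCast, zpow_natCast]
  field_simp

theorem det_fromBlocks_smul_one₂₂ [Fintype κ] [Fintype ν] [DecidableEq κ] [DecidableEq ν]
    {a : K} (ha : a ≠ 0) (A : Matrix κ κ K) (B : Matrix κ ν K) (C : Matrix ν κ K) :
    det (fromBlocks A B C (a • 1)) = a ^ Fintype.card ν * det (A - a⁻¹ • (B * C)) := by
  have hinv : a • (1 : Matrix ν ν K) * a⁻¹ • 1 = 1 := by
    rw [smul_mul_smul_comm, mul_inv_cancel₀ ha, one_smul, one_mul]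
  let : Invertible (a • (1 : Matrix ν ν K)) := invertibleOfRightInverse _ _ hinv
  rw [det_fromBlocks₂₂, det_smul, det_one, mul_one, invOf_eq_right_inv hinv, Matrix.mul_smul,
    Matrix.mul_one, smul_mul]

variable {R : Type*} [CommRing R]

theorem one_sub_smul_reflection_mul_reflection [Fintype ι] [Fintype κ] [Fintype ν] [DecidableEq ι]
    (M : Matrix ι κ R) (N : Matrix ι ν R) (u : R) :
    (1 : Matrix ι ι R) - u • ((2 • (M * Mᵀ) - 1) * (2 • (N * Nᵀ) - 1)) =
      (1 - u) • (1 : Matrix ι ι R) +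
        fromCols M N * ((2 * u) • fromRows (Mᵀ * (1 - 2 • (N * Nᵀ) : Matrix ι ι R)) Nᵀ) := by
  rw [Matrix.mul_smul, fromCols_mul_fromRows]
  simp only [Matrix.sub_mul, Matrix.mul_sub, Matrix.one_mul, Matrix.mul_one, Matrix.mul_smul,
    Matrix.smul_mul, ← Matrix.mul_assoc]
  module

theorem fromRows_mul_fromCols_of_orthonormal [Fintype ι] [Fintype ν]
    [DecidableEq ι] [DecidableEq κ] [DecidableEq ν]
    {M : Matrix ι κ R} {N : Matrix ι ν R} (hM : Mᵀ * M = 1) (hN : Nᵀ * N = 1) :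
    fromRows (Mᵀ * (1 - 2 • (N * Nᵀ) : Matrix ι ι R)) Nᵀ * fromCols M N =
      fromBlocks (1 - 2 • (Mᵀ * N * (Mᵀ * N)ᵀ)) (-(Mᵀ * N)) (Mᵀ * N)ᵀ 1 := by
  rw [fromRows_mul_fromCols, transpose_mul, transpose_transpose, hN]
  congr 1
  · simp only [Matrix.mul_sub, Matrix.sub_mul, Matrix.mul_one, Matrix.mul_smul, Matrix.smul_mul,
      hM, Matrix.mul_assoc]
  · simp only [Matrix.mul_sub, Matrix.sub_mul, Matrix.mul_one, Matrix.mul_smul, Matrix.smul_mul,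
      hN, Matrix.mul_assoc]
    module

theorem det_smul_one_add_smul_fromBlocks [Fintype κ] [Fintype ν] [DecidableEq κ] [DecidableEq ν]
    {u : K} (hu : 1 + u ≠ 0) (A : Matrix κ ν K) :
    det ((1 - u) • 1 + (2 * u) • fromBlocks (1 - 2 • (A * Aᵀ)) (-A) Aᵀ 1) =
      (1 + u) ^ ((Fintype.card ν : ℤ) - Fintype.card κ) *
        det ((1 + u) ^ 2 • (1 : Matrix κ κ K) - (4 * u) • (A * Aᵀ)) := by
  have hblocks : (1 - u) • 1 + (2 * u) • fromBlocks (1 - 2 • (A * Aᵀ)) (-A) Aᵀ 1 =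
      fromBlocks ((1 + u) • 1 - (4 * u) • (A * Aᵀ)) (-(2 * u) • A) ((2 * u) • Aᵀ)
        ((1 + u) • 1) := by
    rw [← fromBlocks_one, fromBlocks_smul, fromBlocks_smul, fromBlocks_add]
    congr 1 <;> module
  have hschur :
      (1 + u) • 1 - (4 * u) • (A * Aᵀ) - (1 + u)⁻¹ • ((-(2 * u) • A) * ((2 * u) • Aᵀ)) =
      (1 + u)⁻¹ • ((1 + u) ^ 2 • (1 : Matrix κ κ K) - (4 * u) • (A * Aᵀ)) := by
    rw [smul_mul, Matrix.mul_smul, smul_smul, smul_smul]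
    match_scalars <;> field_simp
    ring
  rw [hblocks, det_fromBlocks_smul_one₂₂ hu, hschur, det_smul, inv_pow, zpow_sub₀ hu,
    zpow_natCast, zpow_natCast]
  field_simp

end Matrix

theorem vertex_face_walk_det_general (m n k : ℕ)
    (M : Matrix (Fin (2 * m)) (Fin k) ℂ) (N : Matrix (Fin (2 * m)) (Fin n) ℂ)
    (hM : Mᵀ * M = 1) (hN : Nᵀ * N = 1)
    (u : ℂ) (hu1 : u ≠ 1) (hu2 : u ≠ -1) :
    ((1 : Matrix (Fin (2 * m)) (Fin (2 * m)) ℂ) - u • ((2 • (M * Mᵀ) - 1) * (2 • (N * Nᵀ) - 1))).det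
      = (1 - u) ^ ((2 * m : ℤ) - n - k) * (1 + u) ^ ((n : ℤ) - k) *
        ((1 + u) ^ 2 • (1 : Matrix (Fin k) (Fin k) ℂ) - (4 * u) • (Mᵀ * N * Nᵀ * M)).det := by
  have h1u : 1 - u ≠ 0 := sub_ne_zero.2 hu1.symm
  have h1u' : 1 + u ≠ 0 := fun h ↦ hu2 (by linear_combination h)
  rw [one_sub_smul_reflection_mul_reflection, det_smul_one_add_mul_comm h1u, Matrix.smul_mul,
    fromRows_mul_fromCols_of_orthonormal hM hN, det_smul_one_add_smul_fromBlocks h1u',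
    transpose_mul, transpose_transpose, ← Matrix.mul_assoc]
  simp only [Fintype.card_fin, Fintype.card_sum]
  push_cast
  ring_nf

theorem vertex_face_walk_det (m n k : ℕ) (hn : n ≤ 2 * m) (hk : k ≤ 2 * m)
    (M : Matrix (Fin (2 * m)) (Fin k) ℂ) (N : Matrix (Fin (2 * m)) (Fin n) ℂ)
    (hM : Mᵀ * M = 1) (hN : Nᵀ * N = 1)
    (u : ℂ) (hu1 : u ≠ 1) (hu2 : u ≠ -1) :
    ((1 : Matrix (Fin (2 * m)) (Fin (2 * m)) ℂ) - u • ((2 • (M * Mᵀ) - 1) * (2 • (N * Nᵀ) - 1))).det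
      = (1 - u) ^ ((2 * m : ℤ) - n - k) * (1 + u) ^ ((n : ℤ) - k) *
        ((1 + u) ^ 2 • (1 : Matrix (Fin k) (Fin k) ℂ) - (4 * u) • (Mᵀ * N * Nᵀ * M)).det :=
  vertex_face_walk_det_general m n k M N hM hN u hu1 hu2
end

section
/- Let M be a 2m×k complex matrix with Mᵀ·M = I_k and N a 2m×n complex matrix with Nᵀ·N = I_n, and set U = (2·M·Mᵀ − I)·(2·N·Nᵀ − I). Then (λ−1)^{n+k}·(λ+1)^{k}·det(λ·I_{2m} − U) = (λ−1)^{2m}·(λ+1)^{n}·det((λ+1)²·I_k − 4λ·Mᵀ·N·Nᵀ·M) for all λ : ℂ. -/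
/-!
Write `R_M = 2 M Mᵀ - 1` and `R_N = 2 N Nᵀ - 1`; orthonormality of the columns makes both
involutions. Hence `λ - R_M R_N = (λ R_N - R_M) R_N`, and `λ R_N - R_M = -((λ - 1) + A B)` with
`A = [N M]` of size `2m × (n + k)`. Sylvester's determinant identity, exchanging `c + A B` for
`c + B A`, moves the determinant to size `n + k`, where `(λ - 1) + B A` is the block matrix
`[[-(λ + 1), -2λ NᵀM], [2 MᵀN, λ + 1]]` whose Schur complement is `-((λ + 1)² - 4λ MᵀN NᵀM)`.
The powers of `λ ± 1` are exactly what is needed to state Sylvester's identity and the Schur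
complement formula without inverses, so the argument runs over any commutative ring and for
every `λ`.
-/

open Matrix

namespace Matrix

variable {ι n k R : Type*} [CommRing R]

section

variable [Fintype ι] [Fintype n] [Fintype k] [DecidableEq ι] [DecidableEq n] [DecidableEq k]

theorem pow_card_mul_det_smul_one_add_mul_comm (A : Matrix ι n R) (B : Matrix n ι R) (c : R) :
    c ^ Fintype.card n * (c • 1 + A * B).det = c ^ Fintype.card ι * (c • 1 + B * A).det := by
  have h := congrArg (Polynomial.eval c) (charpoly_mul_comm' (-A) B)
  simpa [eval_charpoly, scalar_apply, smul_one_eq_diagonal, sub_eq_add_neg] using h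

theorem pow_card_mul_det_fromBlocks_smul_one₁₁ (a : R) (B : Matrix n k R) (C : Matrix k n R)
    (D : Matrix k k R) :
    a ^ Fintype.card k * (fromBlocks (a • 1) B C D).det
      = a ^ Fintype.card n * (a • D - C * B).det := by
  have hmul : fromBlocks (a • 1) B C D * fromBlocks 1 (-B) 0 (a • 1)
      = fromBlocks (a • 1) 0 C (a • D - C * B) := by
    rw [fromBlocks_multiply]
    congr 1 <;> simp [sub_eq_add_neg, add_comm]
  have hdet := congrArg det hmul
  rw [det_mul, det_fromBlocks_zero₂₁, det_fromBlocks_zero₁₂] at hdet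
  simpa [det_smul, mul_comm] using hdet

theorem det_smul_one_sub_mul_of_mul_self_eq_one {S : Matrix ι ι R} (hS : S * S = 1)
    (T : Matrix ι ι R) (c : R) : (c • 1 - T * S).det = (c • S - T).det * S.det := by
  conv_lhs => rw [← hS, ← Matrix.smul_mul, ← Matrix.sub_mul]
  exact det_mul _ _

/-- For `Nᵀ * N = 1` this is the reflection in the column space of `N`. -/
def reflection (N : Matrix ι n R) : Matrix ι ι R := 2 • (N * Nᵀ) - 1

theorem reflection_mul_self {N : Matrix ι n R} (hN : Nᵀ * N = 1) :
    reflection N * reflection N = 1 := by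
  have hidem : N * Nᵀ * (N * Nᵀ) = N * Nᵀ := by
    rw [Matrix.mul_assoc, ← Matrix.mul_assoc Nᵀ, hN, Matrix.one_mul]
  simp only [reflection, Matrix.sub_mul, Matrix.mul_sub, Matrix.smul_mul, Matrix.mul_smul,
    Matrix.one_mul, Matrix.mul_one, hidem]
  module

theorem det_reflection {N : Matrix ι n R} (hN : Nᵀ * N = 1) :
    (reflection N).det = (-1) ^ (Fintype.card ι + Fintype.card n) := by
  rw [reflection]
  have h := pow_card_mul_det_smul_one_add_mul_comm N (2 • Nᵀ) (-1)
  have hone : (-1 : R) • (1 : Matrix n n R) + 2 • 1 = 1 := by module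
  rw [Matrix.mul_smul, Matrix.smul_mul, hN, hone, det_one, neg_one_smul, neg_add_eq_sub] at h
  have hsq : ((-1 : R) ^ Fintype.card n) ^ 2 = 1 := by
    rw [← pow_mul, pow_mul', neg_one_sq, one_pow]
  linear_combination (-1) ^ Fintype.card n * h - (2 • (N * Nᵀ) - 1).det * hsq

end

theorem smul_reflection_sub_reflection [Fintype n] [Fintype k] [DecidableEq ι]
    (M : Matrix ι k R) (N : Matrix ι n R) (c : R) :
    c • reflection N - reflection M
      = -((c - 1) • 1 + fromCols N M * fromRows ((-2 * c) • Nᵀ) (2 • Mᵀ)) := by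
  rw [fromCols_mul_fromRows, Matrix.mul_smul, Matrix.mul_smul, reflection, reflection]
  module

theorem smul_one_add_fromRows_mul_fromCols [Fintype ι] [DecidableEq n] [DecidableEq k]
    {M : Matrix ι k R} {N : Matrix ι n R} (hM : Mᵀ * M = 1) (hN : Nᵀ * N = 1) (c : R) :
    (c - 1) • 1 + fromRows ((-2 * c) • Nᵀ) (2 • Mᵀ) * fromCols N M
      = fromBlocks (-(c + 1) • 1) ((-2 * c) • (Nᵀ * M)) (2 • (Mᵀ * N)) ((c + 1) • 1) := by
  rw [fromRows_mul_fromCols, Matrix.smul_mul, Matrix.smul_mul, Matrix.smul_mul,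
    Matrix.smul_mul, hN, hM, ← fromBlocks_one, fromBlocks_smul, fromBlocks_add]
  congr 1 <;> module

theorem pow_card_mul_det_smul_one_add_fromRows_mul_fromCols [Fintype ι] [Fintype n] [Fintype k]
    [DecidableEq n] [DecidableEq k] {M : Matrix ι k R} {N : Matrix ι n R}
    (hM : Mᵀ * M = 1) (hN : Nᵀ * N = 1) (c : R) :
    (c + 1) ^ Fintype.card k
        * ((c - 1) • 1 + fromRows ((-2 * c) • Nᵀ) (2 • Mᵀ) * fromCols N M).det
      = (-1) ^ Fintype.card n * (c + 1) ^ Fintype.card n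
        * ((c + 1) ^ 2 • (1 : Matrix k k R) - (4 * c) • (Mᵀ * N * Nᵀ * M)).det := by
  have hSchur : -(c + 1) • (c + 1) • (1 : Matrix k k R) - 2 • (Mᵀ * N) * ((-2 * c) • (Nᵀ * M))
      = -((c + 1) ^ 2 • 1 - (4 * c) • (Mᵀ * N * Nᵀ * M)) := by
    rw [Matrix.smul_mul, Matrix.mul_smul, ← Matrix.mul_assoc]
    module
  have h := pow_card_mul_det_fromBlocks_smul_one₁₁ (-(c + 1)) ((-2 * c) • (Nᵀ * M))
    (2 • (Mᵀ * N)) ((c + 1) • 1)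
  rw [← smul_one_add_fromRows_mul_fromCols hM hN, hSchur, det_neg, neg_pow, neg_pow (c + 1)] at h
  exact (isUnit_neg_one.pow (Fintype.card k)).mul_left_cancel (by rw [← mul_assoc, h]; ring)

theorem pow_mul_det_smul_one_sub_reflection_mul_reflection [Fintype ι] [Fintype n] [Fintype k]
    [DecidableEq ι] [DecidableEq n] [DecidableEq k] {M : Matrix ι k R} {N : Matrix ι n R}
    (hM : Mᵀ * M = 1) (hN : Nᵀ * N = 1) (c : R) :
    (c - 1) ^ (Fintype.card n + Fintype.card k) * (c + 1) ^ Fintype.card k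
        * (c • 1 - reflection M * reflection N).det
      = (c - 1) ^ Fintype.card ι * (c + 1) ^ Fintype.card n
        * ((c + 1) ^ 2 • (1 : Matrix k k R) - (4 * c) • (Mᵀ * N * Nᵀ * M)).det := by
  have hWA := pow_card_mul_det_smul_one_add_mul_comm (fromCols N M)
    (fromRows ((-2 * c) • Nᵀ) (2 • Mᵀ)) (c - 1)
  rw [Fintype.card_sum] at hWA
  have hsign (j : ℕ) : ((-1 : R) ^ j) ^ 2 = 1 := by rw [← pow_mul, pow_mul', neg_one_sq, one_pow]
  rw [det_smul_one_sub_mul_of_mul_self_eq_one (reflection_mul_self hN),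
    smul_reflection_sub_reflection, det_neg, det_reflection hN, pow_add (-1 : R)]
  set L := (c - 1) ^ Fintype.card ι
  set D := ((c + 1) ^ 2 • (1 : Matrix k k R) - (4 * c) • (Mᵀ * N * Nᵀ * M)).det
  set eι := (-1 : R) ^ Fintype.card ι
  set en := (-1 : R) ^ Fintype.card n
  -- the signs `eι` (from `det_neg`) and `eι * en` (from `det_reflection`) cancel in pairs
  linear_combination (c + 1) ^ Fintype.card k * eι ^ 2 * en * hWA
    + eι ^ 2 * en * L * pow_card_mul_det_smul_one_add_fromRows_mul_fromCols hM hN c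
    + L * (c + 1) ^ Fintype.card n * D * en ^ 2 * hsign (Fintype.card ι)
    + L * (c + 1) ^ Fintype.card n * D * hsign (Fintype.card n)

end Matrix

theorem vertex_face_walk_charpoly (m n k : ℕ)
    (M : Matrix (Fin (2 * m)) (Fin k) ℂ) (N : Matrix (Fin (2 * m)) (Fin n) ℂ)
    (hM : Mᵀ * M = 1) (hN : Nᵀ * N = 1) (lam : ℂ) :
    (lam - 1) ^ (n + k) * (lam + 1) ^ k *
      (lam • (1 : Matrix (Fin (2 * m)) (Fin (2 * m)) ℂ)
        - (2 • (M * Mᵀ) - 1) * (2 • (N * Nᵀ) - 1)).det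
      = (lam - 1) ^ (2 * m) * (lam + 1) ^ n *
        ((lam + 1) ^ 2 • (1 : Matrix (Fin k) (Fin k) ℂ) - (4 * lam) • (Mᵀ * N * Nᵀ * M)).det := by
  simpa only [Fintype.card_fin, reflection] using
    pow_mul_det_smul_one_sub_reflection_mul_reflection hM hN lam
end

section
/- If μ is an eigenvalue of the matrix K = Mᵀ·N·Nᵀ·M (with Mᵀ·M = I_k, Nᵀ·N = I_n, and U = (2MMᵀ−I)(2NNᵀ−I)), then both roots λ of λ² − 2(2μ−1)λ + 1 = 0 are eigenvalues of U (i.e., det(λ·I − U) = 0), provided λ ≠ ±1. -/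
open Matrix

theorem eigenvalue_of_vertex_face_walk (m n k : ℕ)
    (M : Matrix (Fin (2 * m)) (Fin k) ℂ) (N : Matrix (Fin (2 * m)) (Fin n) ℂ)
    (hM : Mᵀ * M = 1) (hN : Nᵀ * N = 1) (μ : ℂ)
    (hμ : (μ • (1 : Matrix (Fin k) (Fin k) ℂ) - Mᵀ * N * Nᵀ * M).det = 0)
    (lam : ℂ) (hlam : lam ^ 2 - 2 * (2 * μ - 1) * lam + 1 = 0)
    (h1 : lam ≠ 1) (h2 : lam ≠ -1) :
    (lam • (1 : Matrix (Fin (2 * m)) (Fin (2 * m)) ℂ)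
      - (2 • (M * Mᵀ) - 1) * (2 • (N * Nᵀ) - 1)).det = 0 := by
  rw [← Matrix.exists_mulVec_eq_zero_iff] at hμ ⊢
  obtain ⟨v, hv0, hv⟩ := hμ
  have h2Q : (2 : ℕ) • (M * Mᵀ) = (2 : ℂ) • (M * Mᵀ) := by rw [two_smul, two_smul]
  have h2P : (2 : ℕ) • (N * Nᵀ) = (2 : ℂ) • (N * Nᵀ) := by rw [two_smul, two_smul]
  rw [h2Q, h2P]
  set P := N * Nᵀ with hPdef
  set Q := M * Mᵀ with hQdef
  have hPP : P * P = P := by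
    rw [hPdef, Matrix.mul_assoc, ← Matrix.mul_assoc Nᵀ, hN, Matrix.one_mul]
  set x := M *ᵥ v with hxdef
  have hKv : (Mᵀ * N * Nᵀ * M) *ᵥ v = μ • v := by
    have h := hv
    rw [sub_mulVec, smul_mulVec, one_mulVec, sub_eq_zero] at h
    exact h.symm
  have hA : Mᵀ *ᵥ x = v := by
    rw [hxdef, mulVec_mulVec, hM, one_mulVec]
  have hB : Q *ᵥ x = x := by
    rw [hQdef, ← mulVec_mulVec, hA]
  have hC : Mᵀ *ᵥ (P *ᵥ x) = μ • v := by
    rw [hPdef, hxdef, mulVec_mulVec, mulVec_mulVec, ← Matrix.mul_assoc]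
    exact hKv
  have hD : Q *ᵥ (P *ᵥ x) = μ • x := by
    rw [hQdef, ← mulVec_mulVec, hC, mulVec_smul]
  have hE : P *ᵥ (P *ᵥ x) = P *ᵥ x := by
    rw [mulVec_mulVec, hPP]
  have hx0 : x ≠ 0 := by
    intro h
    exact hv0 (by rw [← hA, h, mulVec_zero])
  clear_value P Q x
  clear hv hKv hA hC hPdef hQdef hxdef hPP hM hN hv0
  refine ⟨(-(lam + 1)) • x + (2 : ℂ) • (P *ᵥ x), ?_, ?_⟩
  · intro h
    have hcomb : (2 : ℂ) • (P *ᵥ x) = (lam + 1) • x := by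
      have h' := h
      rw [neg_smul, neg_add_eq_zero] at h'
      exact h'.symm
    have hQc : Q *ᵥ ((2 : ℂ) • (P *ᵥ x)) = Q *ᵥ ((lam + 1) • x) := by rw [hcomb]
    rw [mulVec_smul, mulVec_smul, hD, hB, smul_smul] at hQc
    have hmu : (2 * μ - (lam + 1)) • x = 0 := by
      rw [sub_smul, hQc]; simp
    have hmu2 : 2 * μ = lam + 1 := by
      rcases smul_eq_zero.mp hmu with h' | h'
      · exact sub_eq_zero.mp h'
      · exact absurd h' hx0
    have hfac : (lam - 1) * (lam + 1) = 0 := by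
      linear_combination -hlam - 2 * lam * hmu2
    rcases mul_eq_zero.mp hfac with h' | h'
    · exact h1 (by linear_combination h')
    · exact h2 (by linear_combination h')
  · rw [sub_mulVec, smul_mulVec, one_mulVec, ← mulVec_mulVec]
    simp only [sub_mulVec, smul_mulVec, one_mulVec, mulVec_add, mulVec_smul,
      mulVec_sub, mulVec_neg, hB, hD, hE, neg_neg, smul_add, smul_sub, smul_smul,
      smul_neg, neg_smul]
    match_scalars
    · linear_combination -hlam
    · ring
end
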